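/- The function Q(x) = (1 + |x|²/24)^{-2} on ℝ⁶ satisfies the elliptic equation ΔQ + Q² = 0, i.e., for all x ∈ ℝ⁶, the Laplacian of Q at x plus Q(x)² equals zero. -/

import Mathlib

noncomputable def laplacian {F : Type*} [NormedAddCommGroup F] [NormedSpace ℝ F]
    (f : EuclideanSpace ℝ (Fin 6) → F) (x : EuclideanSpace ℝ (Fin 6)) : F :=
  ∑ i : Fin 6,
    fderiv ℝ (fun y => fderiv ℝ f y (EuclideanSpace.single i 1)) x (EuclideanSpace.single i 1)

noncomputable def Qgs (x : EuclideanSpace ℝ (Fin 6)) : ℝ :=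
  1 / (1 + ‖x‖ ^ 2 / 24) ^ 2

private lemma t_pos (s : ℝ) (hs : 0 ≤ s) : (0:ℝ) < 1 + s / 24 := by positivity

private lemma hasDerivAt_base (s : ℝ) :
    HasDerivAt (fun s : ℝ => 1 + s / 24) (1/24) s := by
  simpa using ((hasDerivAt_id s).div_const 24).const_add 1

private lemma hasDerivAt_F (s : ℝ) (hs : 0 ≤ s) :
    HasDerivAt (fun s : ℝ => 1 / (1 + s / 24) ^ 2) (-(1/12) / (1 + s / 24) ^ 3) s := by
  have ht := (t_pos s hs).ne'
  have h2 : HasDerivAt (fun s : ℝ => 1 / (1 + s / 24) ^ 2)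
      (-(2 * (1 + s / 24) ^ 1 * (1/24)) / ((1 + s / 24) ^ 2) ^ 2) s := by
    simpa [one_div] using ((hasDerivAt_base s).fun_pow 2).fun_inv (pow_ne_zero _ ht)
  convert h2 using 1
  field_simp
  ring

private lemma hasDerivAt_F' (s : ℝ) (hs : 0 ≤ s) :
    HasDerivAt (fun s : ℝ => -(1/12) / (1 + s / 24) ^ 3) ((1/96) / (1 + s / 24) ^ 4) s := by
  have ht : (1 + s / 24) ≠ 0 := (t_pos s hs).ne'
  have h2 : HasDerivAt (fun s : ℝ => -(1/12) * ((1 + s / 24) ^ 3)⁻¹)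
      (-(1/12) * (-(3 * (1 + s / 24) ^ 2 * (1/24)) / ((1 + s / 24) ^ 3) ^ 2)) s :=
    (((hasDerivAt_base s).pow 3).inv (pow_ne_zero _ ht)).const_mul _
  have : HasDerivAt (fun s : ℝ => -(1/12) / (1 + s / 24) ^ 3)
      (-(1/12) * (-(3 * (1 + s / 24) ^ 2 * (1/24)) / ((1 + s / 24) ^ 3) ^ 2)) s := by
    simpa [div_eq_mul_inv] using h2
  convert this using 1
  field_simp
  ring

private lemma hasFDerivAt_normsq (y : EuclideanSpace ℝ (Fin 6)) :
    HasFDerivAt (fun x : EuclideanSpace ℝ (Fin 6) => ‖x‖ ^ 2) (2 • (innerSL ℝ y)) y :=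
  (hasStrictFDerivAt_norm_sq y).hasFDerivAt

private lemma fderiv_Qgs (y : EuclideanSpace ℝ (Fin 6)) (i : Fin 6) :
    fderiv ℝ Qgs y (EuclideanSpace.single i 1)
      = (-(1/12) / (1 + ‖y‖ ^ 2 / 24) ^ 3) * (2 * y i) := by
  have h : HasFDerivAt Qgs
      ((-(1/12) / (1 + ‖y‖ ^ 2 / 24) ^ 3) • (2 • (innerSL ℝ y))) y :=
    (hasDerivAt_F _ (by positivity)).comp_hasFDerivAt y (hasFDerivAt_normsq y)
  rw [h.fderiv]
  simp [real_inner_comm, EuclideanSpace.inner_single_left, EuclideanSpace.inner_single_right, mul_comm]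

theorem Qgs_solves_elliptic : ∀ x : EuclideanSpace ℝ (Fin 6),
    laplacian Qgs x + (Qgs x) ^ 2 = 0 := by
  intro x
  set s := ‖x‖ ^ 2 with hs
  have hs0 : 0 ≤ s := by positivity
  have ht : (1 + s / 24) ≠ 0 := (t_pos s hs0).ne'
  have key : ∀ i : Fin 6,
      fderiv ℝ (fun y => fderiv ℝ Qgs y (EuclideanSpace.single i 1)) x
        (EuclideanSpace.single i 1)
        = ((1/96) / (1 + s / 24) ^ 4) * (2 * x i) * (2 * x i)
          + (-(1/12) / (1 + s / 24) ^ 3) * 2 := by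
    intro i
    have hfun : (fun y => fderiv ℝ Qgs y (EuclideanSpace.single i 1))
        = fun y => (-(1/12) / (1 + ‖y‖ ^ 2 / 24) ^ 3) * (2 * y i) := by
      funext y; exact fderiv_Qgs y i
    rw [hfun]
    have hA : HasFDerivAt (fun y : EuclideanSpace ℝ (Fin 6) =>
        -(1/12) / (1 + ‖y‖ ^ 2 / 24) ^ 3)
        (((1/96) / (1 + s / 24) ^ 4) • (2 • (innerSL ℝ x))) x :=
      by have := (hasDerivAt_F' s hs0).comp_hasFDerivAt x (hasFDerivAt_normsq x); exact this
    have hB : HasFDerivAt (fun y : EuclideanSpace ℝ (Fin 6) => (2:ℝ) * y i)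
        ((2:ℝ) • (EuclideanSpace.proj i : EuclideanSpace ℝ (Fin 6) →L[ℝ] ℝ)) x :=
      by simpa [PiLp.proj_apply] using
        ((EuclideanSpace.proj i : EuclideanSpace ℝ (Fin 6) →L[ℝ] ℝ).hasFDerivAt.const_mul (2:ℝ))
    have hAB := hA.fun_mul hB
    rw [hAB.fderiv]
    simp [real_inner_comm, EuclideanSpace.inner_single_left, EuclideanSpace.inner_single_right, PiLp.proj_apply, ← hs]
    ring
  have hsum : ∑ i : Fin 6, (x i) ^ 2 = s := by
    rw [hs, ← real_inner_self_eq_norm_sq]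
    simp [PiLp.inner_apply, sq]
    rw [← sq, EuclideanSpace.norm_eq, Real.sq_sqrt (by positivity)]; simp [sq]
  unfold laplacian
  simp only [key]
  rw [Finset.sum_add_distrib, Finset.sum_const, Finset.card_univ, Fintype.card_fin, nsmul_eq_mul]
  have h1 : ∑ i : Fin 6, ((1/96) / (1 + s / 24) ^ 4) * (2 * x i) * (2 * x i)
      = ((1/96) / (1 + s / 24) ^ 4) * 4 * s := by
    rw [← hsum, Finset.mul_sum]
    congr 1; funext i; ring
  rw [h1]
  have hQ : Qgs x = 1 / (1 + s / 24) ^ 2 := rfl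
  rw [hQ]
  field_simp
  ring
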